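/- arXiv:1605.07890 — 6 statements merged into one kernel-verified Lean document; each statement's English description precedes it below -/
import Mathlib

section
/- The Bogoliubov dispersion law E(r) = sqrt(κ1 r^2 + κ2 r^4) is a strictly convex function of r on [0,∞). -/
/-- The Bogoliubov dispersion law `E(r) = sqrt (κ1 r^2 + κ2 r^4)` is strictly
convex on `[0, ∞)` for positive constants `κ1, κ2`. -/
theorem bogoliubov_strictConvexOn (κ1 κ2 : ℝ) (hκ1 : 0 < κ1) (hκ2 : 0 < κ2) :
    StrictConvexOn ℝ (Set.Ici (0 : ℝ))
      (fun r : ℝ => Real.sqrt (κ1 * r ^ 2 + κ2 * r ^ 4)) := by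
  constructor
  · exact convex_Ici 0
  intro x hx y hy hxy t s ht hs hts
  simp only [smul_eq_mul]
  have hx0 : (0:ℝ) ≤ x := hx
  have hy0 : (0:ℝ) ≤ y := hy
  set A := κ1 * x ^ 2 + κ2 * x ^ 4 with hAdef
  set B := κ1 * y ^ 2 + κ2 * y ^ 4 with hBdef
  have hA : (0:ℝ) ≤ A := by positivity
  have hB : (0:ℝ) ≤ B := by positivity
  have hsa : Real.sqrt A ^ 2 = A := Real.sq_sqrt hA
  have hsb : Real.sqrt B ^ 2 = B := Real.sq_sqrt hB
  have hsa0 : 0 ≤ Real.sqrt A := Real.sqrt_nonneg A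
  have hsb0 : 0 ≤ Real.sqrt B := Real.sqrt_nonneg B
  -- Cauchy–Schwarz: κ1 x y + κ2 x² y² ≤ √A √B
  have hcs : κ1 * x * y + κ2 * x ^ 2 * y ^ 2 ≤ Real.sqrt A * Real.sqrt B := by
    rw [← Real.sqrt_mul hA]
    have hnn : 0 ≤ κ1 * x * y + κ2 * x ^ 2 * y ^ 2 := by positivity
    rw [Real.le_sqrt hnn]
    · nlinarith [mul_pos hκ1 hκ2, sq_nonneg (x * y * (x - y)), sq_nonneg x, sq_nonneg y]
    · exact mul_nonneg hA hB
  -- strict convexity of the square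
  have hd : x - y ≠ 0 := sub_ne_zero.mpr hxy
  have hd2 : 0 < (x - y) ^ 2 := lt_of_le_of_ne (sq_nonneg _) (Ne.symm (pow_ne_zero 2 hd))
  have h1 : (t * x + s * y) ^ 2 < t * x ^ 2 + s * y ^ 2 := by
    nlinarith [mul_pos (mul_pos ht hs) hd2]
  have h1' : (t * x + s * y) ^ 2 < t * x ^ 2 + s * y ^ 2 := h1
  have h2 : (t * x + s * y) ^ 4 < (t * x ^ 2 + s * y ^ 2) ^ 2 := by
    have := pow_lt_pow_left₀ h1 (sq_nonneg (t * x + s * y)) two_ne_zero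
    calc (t * x + s * y) ^ 4 = ((t * x + s * y) ^ 2) ^ 2 := by ring
      _ < (t * x ^ 2 + s * y ^ 2) ^ 2 := this
  -- the RHS is positive
  have hR : 0 < t * Real.sqrt A + s * Real.sqrt B := by
    rcases eq_or_ne x 0 with hx0' | hx0'
    · have hy0' : y ≠ 0 := by rintro rfl; exact hxy (by rw [hx0'])
      have : 0 < B := by
        have : 0 < y ^ 2 := by positivity
        nlinarith [sq_nonneg (y^2)]
      have : 0 < Real.sqrt B := Real.sqrt_pos.mpr this
      positivity
    · have : 0 < A := by
        have : 0 < x ^ 2 := by positivity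
        nlinarith [sq_nonneg (x^2)]
      have : 0 < Real.sqrt A := Real.sqrt_pos.mpr this
      positivity
  have key : κ1 * (t * x + s * y) ^ 2 + κ2 * (t * x + s * y) ^ 4
      < (t * Real.sqrt A + s * Real.sqrt B) ^ 2 := by
    have hmul : 2 * t * s * (κ1 * x * y + κ2 * x ^ 2 * y ^ 2)
        ≤ 2 * t * s * (Real.sqrt A * Real.sqrt B) := by
      apply mul_le_mul_of_nonneg_left hcs
      positivity
    have e1 : (t * Real.sqrt A + s * Real.sqrt B) ^ 2
        = t ^ 2 * A + s ^ 2 * B + 2 * t * s * (Real.sqrt A * Real.sqrt B) := by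
      linear_combination t ^ 2 * hsa + s ^ 2 * hsb
    have e2 : t ^ 2 * A + s ^ 2 * B + 2 * t * s * (κ1 * x * y + κ2 * x ^ 2 * y ^ 2)
        = κ1 * (t * x + s * y) ^ 2 + κ2 * (t * x ^ 2 + s * y ^ 2) ^ 2 := by
      rw [hAdef, hBdef]; ring
    have h3 : κ2 * (t * x + s * y) ^ 4 < κ2 * (t * x ^ 2 + s * y ^ 2) ^ 2 :=
      mul_lt_mul_of_pos_left h2 hκ2
    linarith
  calc Real.sqrt (κ1 * (t * x + s * y) ^ 2 + κ2 * (t * x + s * y) ^ 4)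
      < Real.sqrt ((t * Real.sqrt A + s * Real.sqrt B) ^ 2) := by
        apply Real.sqrt_lt_sqrt (by positivity) key
    _ = t * Real.sqrt A + s * Real.sqrt B := Real.sqrt_sq hR.le
end

section
/- If w ∈ ℝ^3 lies on the energy surface S_p with p ≠ 0 and w ∉ {0, p}, then w·(w−p) < 0; consequently S_p is contained in the closed ball of center p/2 and radius |p|/2. -/
/-!
Write `E(q) = φ(‖q‖²)` with `φ(s) = √(κ₁ s + κ₂ s²)`. Since
`φ(s)φ(t) > κ₂ s t` for `s, t > 0`, squaring shows that `φ` is strictly subadditive, and it is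
strictly increasing. Hence `φ(‖p - w‖²) + φ(‖w‖²) = φ(‖p‖²)` forces
`‖p - w‖² + ‖w‖² < ‖p‖²`, i.e. `⟪w, w - p⟫ < 0`, and `⟪w, w - p⟫ ≤ 0` says exactly that
`w` lies in the closed ball with diameter `[0, p]`.
-/

noncomputable def Edisp (κ1 κ2 : ℝ) (p : EuclideanSpace ℝ (Fin 3)) : ℝ :=
  Real.sqrt (κ1 * ‖p‖ ^ 2 + κ2 * ‖p‖ ^ 4)

section InnerProductSpace

variable {E : Type*} [NormedAddCommGroup E] [InnerProductSpace ℝ E]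

lemma norm_sub_half_smul_sq (w p : E) :
    ‖w - (1 / 2 : ℝ) • p‖ ^ 2 = inner ℝ w (w - p) + (‖p‖ / 2) ^ 2 := by
  rw [norm_sub_sq_real, real_inner_smul_right, norm_smul, inner_sub_right,
    real_inner_self_eq_norm_sq, Real.norm_of_nonneg (by norm_num)]
  ring

lemma mem_closedBall_half_smul_of_inner_sub_nonpos {w p : E} (h : inner ℝ w (w - p) ≤ 0) :
    w ∈ Metric.closedBall ((1 / 2 : ℝ) • p) (‖p‖ / 2) := by
  rw [Metric.mem_closedBall, dist_eq_norm,
    ← pow_le_pow_iff_left₀ (norm_nonneg _) (by positivity) two_ne_zero, norm_sub_half_smul_sq]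
  linarith

end InnerProductSpace

noncomputable def dispersionProfile (κ1 κ2 s : ℝ) : ℝ := √(κ1 * s + κ2 * s ^ 2)

section Dispersion

variable {κ1 κ2 : ℝ}

lemma dispersionProfile_strictMonoOn (hκ1 : 0 < κ1) (hκ2 : 0 ≤ κ2) :
    StrictMonoOn (dispersionProfile κ1 κ2) (Set.Ici 0) := by
  intro s (hs : 0 ≤ s) t _ hst
  have hgap : κ1 * t + κ2 * t ^ 2 - (κ1 * s + κ2 * s ^ 2) = (t - s) * (κ1 + κ2 * (s + t)) := by
    ring
  have hpos : 0 < (t - s) * (κ1 + κ2 * (s + t)) := mul_pos (sub_pos.2 hst) (by nlinarith)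
  exact Real.sqrt_lt_sqrt (by positivity) (by linarith)

lemma dispersionProfile_add_lt (hκ1 : 0 < κ1) (hκ2 : 0 ≤ κ2) {s t : ℝ} (hs : 0 < s)
    (ht : 0 < t) :
    dispersionProfile κ1 κ2 (s + t) < dispersionProfile κ1 κ2 s + dispersionProfile κ1 κ2 t := by
  unfold dispersionProfile
  have hA : 0 ≤ κ1 * s + κ2 * s ^ 2 := by positivity
  have hB : 0 ≤ κ1 * t + κ2 * t ^ 2 := by positivity
  have hcross : κ2 * s * t < √(κ1 * s + κ2 * s ^ 2) * √(κ1 * t + κ2 * t ^ 2) := by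
    rw [← Real.sqrt_mul hA, Real.lt_sqrt (by positivity)]
    have hgap : 0 < κ1 * s * t * (κ1 + κ2 * (s + t)) := by positivity
    linear_combination hgap
  rw [Real.sqrt_lt' (by positivity)]
  linear_combination 2 * hcross - Real.sq_sqrt hA - Real.sq_sqrt hB

lemma Edisp_eq_dispersionProfile (p : EuclideanSpace ℝ (Fin 3)) :
    Edisp κ1 κ2 p = dispersionProfile κ1 κ2 (‖p‖ ^ 2) := by
  rw [Edisp, dispersionProfile]
  ring_nf

lemma norm_sq_add_norm_sq_lt_of_Edisp_add_eq (hκ1 : 0 < κ1) (hκ2 : 0 ≤ κ2)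
    {v w : EuclideanSpace ℝ (Fin 3)} (hv : v ≠ 0) (hw : w ≠ 0)
    (h : Edisp κ1 κ2 v + Edisp κ1 κ2 w = Edisp κ1 κ2 (v + w)) :
    ‖v‖ ^ 2 + ‖w‖ ^ 2 < ‖v + w‖ ^ 2 := by
  simp only [Edisp_eq_dispersionProfile] at h
  have hsub := dispersionProfile_add_lt hκ1 hκ2 (pow_pos (norm_pos_iff.2 hv) 2)
    (pow_pos (norm_pos_iff.2 hw) 2)
  rw [h] at hsub
  exact ((dispersionProfile_strictMonoOn hκ1 hκ2).lt_iff_lt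
    (Set.mem_Ici.2 (by positivity)) (Set.mem_Ici.2 (by positivity))).mp hsub

lemma inner_sub_neg_of_Edisp_sub_add_eq (hκ1 : 0 < κ1) (hκ2 : 0 ≤ κ2)
    {p w : EuclideanSpace ℝ (Fin 3)} (h : Edisp κ1 κ2 (p - w) + Edisp κ1 κ2 w = Edisp κ1 κ2 p)
    (hw0 : w ≠ 0) (hwp : w ≠ p) :
    inner ℝ w (w - p) < 0 := by
  have hlt := norm_sq_add_norm_sq_lt_of_Edisp_add_eq hκ1 hκ2 (sub_ne_zero.2 hwp.symm) hw0
    (by rwa [sub_add_cancel])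
  rw [norm_add_sq_real, real_inner_comm, ← neg_sub, inner_neg_right] at hlt
  linarith

lemma inner_sub_nonpos_of_Edisp_sub_add_eq (hκ1 : 0 < κ1) (hκ2 : 0 ≤ κ2)
    {p w : EuclideanSpace ℝ (Fin 3)} (h : Edisp κ1 κ2 (p - w) + Edisp κ1 κ2 w = Edisp κ1 κ2 p) :
    inner ℝ w (w - p) ≤ 0 := by
  rcases eq_or_ne w 0 with rfl | hw0
  · simp
  rcases eq_or_ne w p with rfl | hwp
  · simp
  exact (inner_sub_neg_of_Edisp_sub_add_eq hκ1 hκ2 h hw0 hwp).le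

end Dispersion

theorem surface_in_ball_general (κ1 κ2 : ℝ) (hκ1 : 0 < κ1) (hκ2 : 0 < κ2)
    (p : EuclideanSpace ℝ (Fin 3)) :
    (∀ w : EuclideanSpace ℝ (Fin 3),
      Edisp κ1 κ2 (p - w) + Edisp κ1 κ2 w = Edisp κ1 κ2 p → w ≠ 0 → w ≠ p →
        (inner ℝ w (w - p) : ℝ) < 0) ∧
    {w : EuclideanSpace ℝ (Fin 3) |
        Edisp κ1 κ2 (p - w) + Edisp κ1 κ2 w = Edisp κ1 κ2 p} ⊆
      Metric.closedBall ((1 / 2 : ℝ) • p) (‖p‖ / 2) :=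
  ⟨fun _ h hw0 hwp => inner_sub_neg_of_Edisp_sub_add_eq hκ1 hκ2.le h hw0 hwp,
    fun _ h => mem_closedBall_half_smul_of_inner_sub_nonpos
      (inner_sub_nonpos_of_Edisp_sub_add_eq hκ1 hκ2.le h)⟩

/-- If `w ∈ S_p` with `p ≠ 0` and `w ∉ {0, p}` then `w·(w−p) < 0`; consequently
`S_p` is contained in the closed ball of center `p/2` and radius `|p|/2`. -/
theorem surface_in_ball (κ1 κ2 : ℝ) (hκ1 : 0 < κ1) (hκ2 : 0 < κ2)
    (p : EuclideanSpace ℝ (Fin 3)) (hp : p ≠ 0) :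
    (∀ w : EuclideanSpace ℝ (Fin 3),
      Edisp κ1 κ2 (p - w) + Edisp κ1 κ2 w = Edisp κ1 κ2 p → w ≠ 0 → w ≠ p →
        (inner ℝ w (w - p) : ℝ) < 0) ∧
    {w : EuclideanSpace ℝ (Fin 3) |
        Edisp κ1 κ2 (p - w) + Edisp κ1 κ2 w = Edisp κ1 κ2 p} ⊆
      Metric.closedBall ((1 / 2 : ℝ) • p) (‖p‖ / 2) :=
  surface_in_ball_general κ1 κ2 hκ1 hκ2 p
end

section
/- On the surface S_p, the identity −w·(w−p)·(κ1 + κ2|w|^2 + κ2|w−p|^2 + κ2|p|^2) = E(w)E(p−w) − κ2 |w|^2 |p−w|^2 holds for every w ∈ S_p. -/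
/-! Squaring `E(p - w) + E(w) = E(p)` expresses the product `E(w) E(p - w)` through the squares
`E(q)² = κ1 |q|² + κ2 |q|⁴`, which are polynomials in the norms. With `a = w`, `b = p - w` the
claim then becomes a polarization identity for `q ↦ κ1 |q|² + κ2 |q|⁴`, valid for all `a, b`. -/

theorem Edisp_sq {κ1 κ2 : ℝ} (hκ1 : 0 ≤ κ1) (hκ2 : 0 ≤ κ2) (q : EuclideanSpace ℝ (Fin 3)) :
    Edisp κ1 κ2 q ^ 2 = κ1 * ‖q‖ ^ 2 + κ2 * ‖q‖ ^ 4 :=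
  Real.sq_sqrt (by positivity)

theorem inner_mul_quartic_polarization {V : Type*} [NormedAddCommGroup V]
    [InnerProductSpace ℝ V] (κ1 κ2 : ℝ) (a b : V) :
    inner ℝ a b * (κ1 + κ2 * ‖a‖ ^ 2 + κ2 * ‖b‖ ^ 2 + κ2 * ‖a + b‖ ^ 2) =
      ((κ1 * ‖a + b‖ ^ 2 + κ2 * ‖a + b‖ ^ 4) - (κ1 * ‖a‖ ^ 2 + κ2 * ‖a‖ ^ 4)
        - (κ1 * ‖b‖ ^ 2 + κ2 * ‖b‖ ^ 4)) / 2 - κ2 * ‖a‖ ^ 2 * ‖b‖ ^ 2 := by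
  linear_combination (-κ1 / 2 - κ2 / 2 * (‖a + b‖ ^ 2 + ‖a‖ ^ 2 + ‖b‖ ^ 2)) *
    norm_add_sq_real a b

theorem surface_identity_general (κ1 κ2 : ℝ) (hκ1 : 0 < κ1) (hκ2 : 0 < κ2)
    (p : EuclideanSpace ℝ (Fin 3))
    (w : EuclideanSpace ℝ (Fin 3))
    (hw : Edisp κ1 κ2 (p - w) + Edisp κ1 κ2 w = Edisp κ1 κ2 p) :
    -(inner ℝ w (w - p) : ℝ) *
        (κ1 + κ2 * ‖w‖ ^ 2 + κ2 * ‖w - p‖ ^ 2 + κ2 * ‖p‖ ^ 2) =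
      Edisp κ1 κ2 w * Edisp κ1 κ2 (p - w) - κ2 * ‖w‖ ^ 2 * ‖p - w‖ ^ 2 := by
  have hprod : Edisp κ1 κ2 w * Edisp κ1 κ2 (p - w) =
      (Edisp κ1 κ2 p ^ 2 - Edisp κ1 κ2 w ^ 2 - Edisp κ1 κ2 (p - w) ^ 2) / 2 := by
    rw [← hw]; ring
  have hpolar := inner_mul_quartic_polarization κ1 κ2 w (p - w)
  rw [add_sub_cancel] at hpolar
  rw [hprod, Edisp_sq hκ1.le hκ2.le, Edisp_sq hκ1.le hκ2.le, Edisp_sq hκ1.le hκ2.le,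
    ← neg_sub p w, inner_neg_right, neg_neg, norm_neg, hpolar]

/-- On the surface `S_p`, for every `w ∈ S_p`:
`−w·(w−p)·(κ1 + κ2|w|² + κ2|w−p|² + κ2|p|²) = E(w)E(p−w) − κ2 |w|² |p−w|²`. -/
theorem surface_identity (κ1 κ2 : ℝ) (hκ1 : 0 < κ1) (hκ2 : 0 < κ2)
    (p : EuclideanSpace ℝ (Fin 3)) (hp : p ≠ 0)
    (w : EuclideanSpace ℝ (Fin 3))
    (hw : Edisp κ1 κ2 (p - w) + Edisp κ1 κ2 w = Edisp κ1 κ2 p) :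
    -(inner ℝ w (w - p) : ℝ) *
        (κ1 + κ2 * ‖w‖ ^ 2 + κ2 * ‖w - p‖ ^ 2 + κ2 * ‖p‖ ^ 2) =
      Edisp κ1 κ2 w * Edisp κ1 κ2 (p - w) - κ2 * ‖w‖ ^ 2 * ‖p - w‖ ^ 2 :=
  surface_identity_general κ1 κ2 hκ1 hκ2 p w hw
end

section
/- If w ∈ ℝ^3 \ {0} satisfies E(p+w) = E(p) + E(w) for p ≠ 0, then w·p ≤ |p||w| sqrt(κ1 + κ2|w|^2) / sqrt(κ1 + 2κ2|p|^2 + 2κ2|w|^2). In particular, the cosine of the angle θ between w and p satisfies cos θ ≤ sqrt(κ1 + κ2|w|^2)/sqrt(κ1 + 2κ2|p|^2 + 2κ2|w|^2). -/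
namespace Resonance

open Real

variable {κ1 κ2 x y t : ℝ}

theorem eq_sqrt_mul_sqrt (hκ1 : 0 ≤ κ1) (hκ2 : 0 ≤ κ2) {z : ℝ}
    (hz : z ^ 2 = x ^ 2 + 2 * t + y ^ 2)
    (h : √(κ1 * z ^ 2 + κ2 * z ^ 4) = √(κ1 * x ^ 2 + κ2 * x ^ 4) + √(κ1 * y ^ 2 + κ2 * y ^ 4)) :
    κ1 * t + 2 * κ2 * t ^ 2 + 2 * κ2 * t * (x ^ 2 + y ^ 2) + κ2 * x ^ 2 * y ^ 2 =
      √(κ1 * x ^ 2 + κ2 * x ^ 4) * √(κ1 * y ^ 2 + κ2 * y ^ 4) := by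
  have hz4 : z ^ 4 = (z ^ 2) ^ 2 := by ring
  have hsq := congrArg (· ^ 2) h
  simp only [add_sq] at hsq
  rw [sq_sqrt (by positivity), sq_sqrt (by positivity), sq_sqrt (by positivity), hz4, hz] at hsq
  linear_combination hsq / 2

theorem mul_sqrt_le (hκ1 : 0 < κ1) (hκ2 : 0 ≤ κ2) (hx : 0 ≤ x) (hy : 0 ≤ y)
    (h : κ1 * t + 2 * κ2 * t ^ 2 + 2 * κ2 * t * (x ^ 2 + y ^ 2) + κ2 * x ^ 2 * y ^ 2 =
      √(κ1 * x ^ 2 + κ2 * x ^ 4) * √(κ1 * y ^ 2 + κ2 * y ^ 4)) :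
    t * √(κ1 + 2 * κ2 * x ^ 2 + 2 * κ2 * y ^ 2) ≤ x * y * √(κ1 + κ2 * y ^ 2) := by
  set S := √(κ1 * x ^ 2 + κ2 * x ^ 4) * √(κ1 * y ^ 2 + κ2 * y ^ 4)
  set D := κ1 + 2 * κ2 * x ^ 2 + 2 * κ2 * y ^ 2
  set N := κ1 + κ2 * y ^ 2
  have hD : 0 < D := by positivity
  have hS : 0 ≤ S := by positivity
  have hS2 : S ^ 2 = (κ1 * x ^ 2 + κ2 * x ^ 4) * (κ1 * y ^ 2 + κ2 * y ^ 4) := by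
    rw [mul_pow, sq_sqrt (by positivity), sq_sqrt (by positivity)]
  have hlin : t * D ≤ S - κ2 * x ^ 2 * y ^ 2 := by
    linarith [mul_nonneg hκ2 (sq_nonneg t)]
  have hgap : (x * y * √N * √D) ^ 2 - (S - κ2 * x ^ 2 * y ^ 2) ^ 2 =
      κ2 * x ^ 2 * y ^ 2 * (κ1 * x ^ 2 + 2 * κ1 * y ^ 2 + 2 * κ2 * y ^ 4) +
        2 * κ2 * x ^ 2 * y ^ 2 * S := by
    rw [mul_pow, mul_pow, sq_sqrt hD.le, sq_sqrt (by positivity)]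
    linear_combination -hS2
  have hsq : S - κ2 * x ^ 2 * y ^ 2 ≤ x * y * √N * √D :=
    (abs_le_of_sq_le_sq' (sub_nonneg.mp (hgap ▸ by positivity)) (by positivity)).2
  have hsqrtD : 0 < √D := sqrt_pos.mpr hD
  refine le_of_mul_le_mul_right ?_ hsqrtD
  calc t * √D * √D = t * D := by rw [mul_assoc, mul_self_sqrt hD.le]
    _ ≤ x * y * √N * √D := hlin.trans hsq

end Resonance

theorem resonance_cos_bound_general (κ1 κ2 : ℝ) (hκ1 : 0 < κ1) (hκ2 : 0 < κ2)
    (p w : EuclideanSpace ℝ (Fin 3))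
    (hres : Edisp κ1 κ2 (p + w) = Edisp κ1 κ2 p + Edisp κ1 κ2 w) :
    (inner ℝ w p : ℝ) ≤ ‖p‖ * ‖w‖ * Real.sqrt (κ1 + κ2 * ‖w‖ ^ 2) /
        Real.sqrt (κ1 + 2 * κ2 * ‖p‖ ^ 2 + 2 * κ2 * ‖w‖ ^ 2) ∧
    (inner ℝ w p : ℝ) / (‖w‖ * ‖p‖) ≤ Real.sqrt (κ1 + κ2 * ‖w‖ ^ 2) /
        Real.sqrt (κ1 + 2 * κ2 * ‖p‖ ^ 2 + 2 * κ2 * ‖w‖ ^ 2) := by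
  have hpw : ‖p + w‖ ^ 2 = ‖p‖ ^ 2 + 2 * inner ℝ w p + ‖w‖ ^ 2 := by
    rw [norm_add_sq_real, real_inner_comm]
  have key := Resonance.mul_sqrt_le hκ1 hκ2.le (norm_nonneg p) (norm_nonneg w)
    (Resonance.eq_sqrt_mul_sqrt hκ1.le hκ2.le hpw hres)
  have hbound : inner ℝ w p ≤ ‖p‖ * ‖w‖ * Real.sqrt (κ1 + κ2 * ‖w‖ ^ 2) /
      Real.sqrt (κ1 + 2 * κ2 * ‖p‖ ^ 2 + 2 * κ2 * ‖w‖ ^ 2) :=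
    (le_div_iff₀ (Real.sqrt_pos.mpr (by positivity))).mpr key
  refine ⟨hbound, div_le_of_le_mul₀ (by positivity) (by positivity) ?_⟩
  exact hbound.trans_eq (by ring)

/-- If `w ≠ 0` satisfies `E(p+w) = E(p) + E(w)` for `p ≠ 0`, then
`w·p ≤ |p||w| √(κ1 + κ2|w|²)/√(κ1 + 2κ2|p|² + 2κ2|w|²)`; in particular the
cosine of the angle between `w` and `p` is bounded by the same ratio. -/
theorem resonance_cos_bound (κ1 κ2 : ℝ) (hκ1 : 0 < κ1) (hκ2 : 0 < κ2)
    (p w : EuclideanSpace ℝ (Fin 3)) (hp : p ≠ 0) (hw : w ≠ 0)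
    (hres : Edisp κ1 κ2 (p + w) = Edisp κ1 κ2 p + Edisp κ1 κ2 w) :
    (inner ℝ w p : ℝ) ≤ ‖p‖ * ‖w‖ * Real.sqrt (κ1 + κ2 * ‖w‖ ^ 2) /
        Real.sqrt (κ1 + 2 * κ2 * ‖p‖ ^ 2 + 2 * κ2 * ‖w‖ ^ 2) ∧
    (inner ℝ w p : ℝ) / (‖w‖ * ‖p‖) ≤ Real.sqrt (κ1 + κ2 * ‖w‖ ^ 2) /
        Real.sqrt (κ1 + 2 * κ2 * ‖p‖ ^ 2 + 2 * κ2 * ‖w‖ ^ 2) :=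
  resonance_cos_bound_general κ1 κ2 hκ1 hκ2 p w hres
end

section
/- Let G(w) = E(p+w) − E(w) − E(p) with p ≠ 0. For α > 0 and q ⊥ p with q ≠ 0, the directional derivative of G at w = αp + q in the direction q satisfies q·∇G(w) = |q|^2 [E'(|p+w|)/|p+w| − E'(|w|)/|w|] < 0, where E'(r)/r is the strictly decreasing function (κ1+2κ2 r^2)/E(r). -/
/-!
With `s = |w|²` we have `E = √(κ₁ s + κ₂ s²)`, so the chain rule gives
`q·∇E(w) = (q·w) (κ₁ + 2κ₂ s) / E(w)`. For `w = αp + q` with `q ⊥ p` both `q·w` and `q·(p + w)`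
equal `|q|²`, which yields the formula. Its sign follows because
`s ↦ (κ₁ + 2κ₂ s) / √(κ₁ s + κ₂ s²)` is strictly decreasing on `s > 0`
(cross-multiplying and squaring reduces this to `κ₁² (b - a) (κ₁ + κ₂ (a + b)) > 0`)
and `|w| < |p + w|` since `p·w = α |p|² > 0`.
-/

open RealInnerProductSpace

lemma norm_lt_norm_add_of_inner_pos {F : Type*} [NormedAddCommGroup F] [InnerProductSpace ℝ F]
    {p w : F} (h : 0 < ⟪p, w⟫) : ‖w‖ < ‖p + w‖ := by
  refine (pow_lt_pow_iff_left₀ (norm_nonneg _) (norm_nonneg _) two_ne_zero).mp ?_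
  rw [norm_add_sq_real]
  nlinarith [sq_nonneg ‖p‖]

lemma strictAntiOn_div_sqrt {κ1 κ2 : ℝ} (hκ1 : 0 < κ1) (hκ2 : 0 ≤ κ2) :
    StrictAntiOn (fun s : ℝ => (κ1 + 2 * κ2 * s) / Real.sqrt (κ1 * s + κ2 * s ^ 2))
      (Set.Ioi 0) := by
  intro a (ha : 0 < a) b (hb : 0 < b) hab
  have hA : 0 < κ1 * a + κ2 * a ^ 2 := by positivity
  have hB : 0 < κ1 * b + κ2 * b ^ 2 := by positivity
  rw [div_lt_div_iff₀ (Real.sqrt_pos.mpr hB) (Real.sqrt_pos.mpr hA)]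
  refine (pow_lt_pow_iff_left₀ (by positivity) (by positivity) two_ne_zero).mp ?_
  rw [mul_pow, mul_pow, Real.sq_sqrt hA.le, Real.sq_sqrt hB.le]
  have hgap : (κ1 + 2 * κ2 * a) ^ 2 * (κ1 * b + κ2 * b ^ 2)
      - (κ1 + 2 * κ2 * b) ^ 2 * (κ1 * a + κ2 * a ^ 2)
      = κ1 ^ 2 * (b - a) * (κ1 + κ2 * (a + b)) := by ring
  have hpos : 0 < κ1 ^ 2 * (b - a) * (κ1 + κ2 * (a + b)) :=
    mul_pos (mul_pos (by positivity) (sub_pos.mpr hab)) (by positivity)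
  linarith

lemma Edisp_eq_sqrt (κ1 κ2 : ℝ) (v : EuclideanSpace ℝ (Fin 3)) :
    Edisp κ1 κ2 v = Real.sqrt (κ1 * ‖v‖ ^ 2 + κ2 * (‖v‖ ^ 2) ^ 2) := by
  rw [Edisp, ← pow_mul]

lemma Edisp_pos {κ1 κ2 : ℝ} (hκ1 : 0 < κ1) (hκ2 : 0 ≤ κ2) {v : EuclideanSpace ℝ (Fin 3)}
    (hv : v ≠ 0) : 0 < Edisp κ1 κ2 v := by
  have := norm_pos_iff.mpr hv
  rw [Edisp]
  positivity

lemma hasDerivAt_sqrt_quadratic {κ1 κ2 s : ℝ} (hs : κ1 * s + κ2 * s ^ 2 ≠ 0) :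
    HasDerivAt (fun s : ℝ => Real.sqrt (κ1 * s + κ2 * s ^ 2))
      ((κ1 + 2 * κ2 * s) / (2 * Real.sqrt (κ1 * s + κ2 * s ^ 2))) s := by
  have hquad : HasDerivAt (fun s : ℝ => κ1 * s + κ2 * s ^ 2) (κ1 + 2 * κ2 * s) s :=
    (((hasDerivAt_id s).const_mul κ1).add ((hasDerivAt_pow 2 s).const_mul κ2)).congr_deriv
      (by ring)
  exact hquad.sqrt hs

lemma hasDerivAt_Edisp_add_smul {κ1 κ2 : ℝ} {v : EuclideanSpace ℝ (Fin 3)}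
    (hv : Edisp κ1 κ2 v ≠ 0) (q : EuclideanSpace ℝ (Fin 3)) :
    HasDerivAt (fun t : ℝ => Edisp κ1 κ2 (v + t • q))
      (⟪v, q⟫ * ((κ1 + 2 * κ2 * ‖v‖ ^ 2) / Edisp κ1 κ2 v)) 0 := by
  have hline : HasDerivAt (fun t : ℝ => v + t • q) q 0 := by
    simpa using ((hasDerivAt_id (0 : ℝ)).smul_const q).const_add v
  have hnormSq := hline.norm_sq
  simp only [zero_smul, add_zero] at hnormSq
  have hradicand : κ1 * ‖v‖ ^ 2 + κ2 * (‖v‖ ^ 2) ^ 2 ≠ 0 := fun h ↦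
    hv (by rw [Edisp_eq_sqrt, h, Real.sqrt_zero])
  have hE := (hasDerivAt_sqrt_quadratic hradicand).comp_of_eq 0 hnormSq (by simp)
  simp only [Function.comp_def, ← Edisp_eq_sqrt] at hE
  exact hE.congr_deriv (by ring)

/-- Let `G(w) = E(p+w) − E(w) − E(p)` with `p ≠ 0`. For `α > 0` and `q ⊥ p`,
`q ≠ 0`, the directional derivative of `G` at `w = α p + q` in the direction
`q` equals `|q|² (E'(|p+w|)/|p+w| − E'(|w|)/|w|)`, where
`E'(r)/r = (κ1 + 2κ2 r²)/E(r)`, and this quantity is negative. -/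
theorem directional_derivative_neg (κ1 κ2 : ℝ) (hκ1 : 0 < κ1) (hκ2 : 0 < κ2)
    (p q : EuclideanSpace ℝ (Fin 3)) (hp : p ≠ 0) (hq : q ≠ 0)
    (hperp : (inner ℝ q p : ℝ) = 0) (α : ℝ) (hα : 0 < α) :
    HasDerivAt
      (fun t : ℝ =>
        Edisp κ1 κ2 (p + (α • p + q + t • q)) - Edisp κ1 κ2 (α • p + q + t • q)
          - Edisp κ1 κ2 p)
      (‖q‖ ^ 2 *
        ((κ1 + 2 * κ2 * ‖p + (α • p + q)‖ ^ 2) / Edisp κ1 κ2 (p + (α • p + q)) -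
          (κ1 + 2 * κ2 * ‖α • p + q‖ ^ 2) / Edisp κ1 κ2 (α • p + q))) 0 ∧
    ‖q‖ ^ 2 *
        ((κ1 + 2 * κ2 * ‖p + (α • p + q)‖ ^ 2) / Edisp κ1 κ2 (p + (α • p + q)) -
          (κ1 + 2 * κ2 * ‖α • p + q‖ ^ 2) / Edisp κ1 κ2 (α • p + q)) < 0 := by
  set w := α • p + q
  have hpq : ⟪p, q⟫ = 0 := by rwa [real_inner_comm]
  have hwq : ⟪w, q⟫ = ‖q‖ ^ 2 := by
    rw [inner_add_left, real_inner_smul_left, hpq, real_inner_self_eq_norm_sq, mul_zero, zero_add]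
  have hpwq : ⟪p + w, q⟫ = ‖q‖ ^ 2 := by rw [inner_add_left, hpq, hwq, zero_add]
  have hqq : ‖q‖ ^ 2 ≠ 0 := by positivity
  have hw : w ≠ 0 := by rintro hw; rw [hw, inner_zero_left] at hwq; exact hqq hwq.symm
  have hpw : p + w ≠ 0 := by rintro hpw; rw [hpw, inner_zero_left] at hpwq; exact hqq hpwq.symm
  have hpw_inner : 0 < ⟪p, w⟫ := by
    rw [inner_add_right, real_inner_smul_right, hpq, real_inner_self_eq_norm_sq, add_zero]
    have := norm_pos_iff.mpr hp
    positivity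
  constructor
  · have hG := ((hasDerivAt_Edisp_add_smul (Edisp_pos hκ1 hκ2.le hpw).ne' q).sub
      (hasDerivAt_Edisp_add_smul (Edisp_pos hκ1 hκ2.le hw).ne' q)).sub_const (Edisp κ1 κ2 p)
    rw [hwq, hpwq, ← mul_sub] at hG
    simpa only [add_assoc, Pi.sub_apply] using hG
  · have hlt := strictAntiOn_div_sqrt hκ1 hκ2.le
      (show 0 < ‖w‖ ^ 2 by have := norm_pos_iff.mpr hw; positivity)
      (show 0 < ‖p + w‖ ^ 2 by have := norm_pos_iff.mpr hpw; positivity)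
      (pow_lt_pow_left₀ (norm_lt_norm_add_of_inner_pos hpw_inner) (norm_nonneg _) two_ne_zero)
    simp only [← Edisp_eq_sqrt] at hlt
    exact mul_neg_of_pos_of_neg (by positivity) (sub_neg.mpr hlt)
end

section
/- Let E1, E2 > 0 with E1 = ∫ sqrt(κ1)|p| f(p) dp and E2 = ∫ E(p) f(p) dp for a nonnegative f that is not concentrated at the origin, so that E3 := E2 − E1 > 0. Then with δ chosen so that δ κ1^{-1/2} sqrt(κ2) E2 = E3/2, one has ∫_{|p| ≥ δ} |p|^2 f(p) dp ≥ E3/(2 sqrt(κ2)), using the identity E(p) − sqrt(κ1)|p| = κ2|p|^3/(sqrt(κ1) + sqrt(κ1 + κ2|p|^2)) ≤ sqrt(κ2)|p|^2. -/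
/-!
Write `g = (E(p) - √κ1 |p|) f`, so that `E3 = ∫ g`. Pointwise,
`E(p) - √κ1 |p| ≤ √κ2 |p|²` everywhere and `E(p) - √κ1 |p| ≤ κ2 |p|³ / √κ1 ≤ δ κ2 |p|² / √κ1`
on `|p| ≤ δ`. Since `√κ2 ∫ |p|² f ≤ E2`, the choice of `δ` makes the integral of `g` over
`|p| < δ` at most `E3 / 2`, so the integral over `|p| ≥ δ` is at least `E3 / 2`, and it is
bounded by `√κ2 ∫_{|p| ≥ δ} |p|² f`.
-/

open MeasureTheory

section Dispersion

variable {κ1 κ2 : ℝ}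

theorem sqrt_mul_sq_le_Edisp (hκ1 : 0 ≤ κ1) (p : EuclideanSpace ℝ (Fin 3)) :
    Real.sqrt κ2 * ‖p‖ ^ 2 ≤ Edisp κ1 κ2 p :=
  calc Real.sqrt κ2 * ‖p‖ ^ 2 = Real.sqrt (κ2 * (‖p‖ ^ 2) ^ 2) := by
        rw [Real.sqrt_mul' _ (by positivity), Real.sqrt_sq (by positivity)]
    _ ≤ Edisp κ1 κ2 p := Real.sqrt_le_sqrt (by nlinarith [sq_nonneg ‖p‖])

theorem Edisp_sub_le_sqrt_mul_sq (hκ1 : 0 ≤ κ1) (hκ2 : 0 ≤ κ2) (p : EuclideanSpace ℝ (Fin 3)) :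
    Edisp κ1 κ2 p - Real.sqrt κ1 * ‖p‖ ≤ Real.sqrt κ2 * ‖p‖ ^ 2 := by
  have hcross : 0 ≤ Real.sqrt κ1 * Real.sqrt κ2 * ‖p‖ ^ 3 := by positivity
  rw [sub_le_iff_le_add, Edisp, Real.sqrt_le_left (by positivity)]
  linear_combination -‖p‖ ^ 2 * Real.sq_sqrt hκ1 - ‖p‖ ^ 4 * Real.sq_sqrt hκ2 + 2 * hcross

theorem Edisp_sub_le_of_norm_le (hκ1 : 0 < κ1) (hκ2 : 0 ≤ κ2) {δ : ℝ}
    {p : EuclideanSpace ℝ (Fin 3)} (hp : ‖p‖ ≤ δ) :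
    Edisp κ1 κ2 p - Real.sqrt κ1 * ‖p‖ ≤ δ * (Real.sqrt κ1)⁻¹ * κ2 * ‖p‖ ^ 2 := by
  have hs1 : 0 < Real.sqrt κ1 := Real.sqrt_pos.2 hκ1
  set c := κ2 / Real.sqrt κ1 with hc_def
  have hc : 0 ≤ c := by positivity
  have hsc : Real.sqrt κ1 * c = κ2 := mul_div_cancel₀ κ2 hs1.ne'
  clear_value c
  have hcube : Edisp κ1 κ2 p ≤ Real.sqrt κ1 * ‖p‖ + c * ‖p‖ ^ 3 := by
    have h4 : 0 ≤ κ2 * ‖p‖ ^ 4 := by positivity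
    have h6 : 0 ≤ c ^ 2 * ‖p‖ ^ 6 := by positivity
    rw [Edisp, Real.sqrt_le_left (by positivity)]
    linear_combination -‖p‖ ^ 2 * Real.sq_sqrt hκ1.le - 2 * ‖p‖ ^ 4 * hsc + h4 + h6
  have hcube_le : c * ‖p‖ ^ 3 ≤ c * (δ * ‖p‖ ^ 2) := by
    gcongr
    rw [pow_succ']
    exact mul_le_mul_of_nonneg_right hp (sq_nonneg _)
  calc Edisp κ1 κ2 p - Real.sqrt κ1 * ‖p‖ ≤ c * (δ * ‖p‖ ^ 2) := by linarith
    _ = δ * (Real.sqrt κ1)⁻¹ * κ2 * ‖p‖ ^ 2 := by rw [hc_def]; ring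

theorem sqrt_mul_integral_sq_mul_le_integral_Edisp_mul (hκ1 : 0 ≤ κ1)
    {f : EuclideanSpace ℝ (Fin 3) → ℝ} (hf : ∀ p, 0 ≤ f p)
    (h2 : Integrable fun p : EuclideanSpace ℝ (Fin 3) => ‖p‖ ^ 2 * f p)
    (hE : Integrable fun p => Edisp κ1 κ2 p * f p) :
    Real.sqrt κ2 * ∫ p, ‖p‖ ^ 2 * f p ≤ ∫ p, Edisp κ1 κ2 p * f p := by
  rw [← integral_const_mul]
  refine integral_mono (h2.const_mul _) hE fun p => ?_
  simpa only [mul_assoc] using mul_le_mul_of_nonneg_right (sqrt_mul_sq_le_Edisp hκ1 p) (hf p)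

end Dispersion

theorem integral_le_mul_setIntegral_add_mul_integral {α : Type*} [MeasurableSpace α]
    {μ : Measure α} {g m : α → ℝ} {S : Set α} {b c : ℝ} (hS : MeasurableSet S)
    (hg : Integrable g μ) (hm : Integrable m μ) (hm0 : 0 ≤ᵐ[μ] m) (hc : 0 ≤ c)
    (hgS : ∀ x ∈ S, g x ≤ b * m x) (hgSc : ∀ x ∈ Sᶜ, g x ≤ c * m x) :
    ∫ x, g x ∂μ ≤ b * ∫ x in S, m x ∂μ + c * ∫ x, m x ∂μ := by
  rw [← integral_add_compl hS hg]
  gcongr ?_ + ?_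
  · calc ∫ x in S, g x ∂μ ≤ ∫ x in S, b * m x ∂μ :=
          setIntegral_mono_on hg.integrableOn (hm.const_mul b).integrableOn hS hgS
      _ = b * ∫ x in S, m x ∂μ := integral_const_mul b _
  · calc ∫ x in Sᶜ, g x ∂μ ≤ ∫ x in Sᶜ, c * m x ∂μ :=
          setIntegral_mono_on hg.integrableOn (hm.const_mul c).integrableOn hS.compl hgSc
      _ = c * ∫ x in Sᶜ, m x ∂μ := integral_const_mul c _
      _ ≤ c * ∫ x, m x ∂μ := mul_le_mul_of_nonneg_left (setIntegral_le_integral hm hm0) hc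

/-- With `E1 = ∫ √κ1 |p| f`, `E2 = ∫ E f`, `E3 = E2 − E1 > 0`, and `δ` chosen
so that `δ κ1^{-1/2} √κ2 E2 = E3/2`, one has
`∫_{|p| ≥ δ} |p|² f ≥ E3/(2√κ2)`. -/
theorem mass_away_from_origin (κ1 κ2 : ℝ) (hκ1 : 0 < κ1) (hκ2 : 0 < κ2)
    (f : EuclideanSpace ℝ (Fin 3) → ℝ) (hf : ∀ p, 0 ≤ f p)
    (h1 : Integrable (fun p : EuclideanSpace ℝ (Fin 3) => ‖p‖ * f p))
    (hE : Integrable (fun p : EuclideanSpace ℝ (Fin 3) => Edisp κ1 κ2 p * f p))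
    (h2 : Integrable (fun p : EuclideanSpace ℝ (Fin 3) => ‖p‖ ^ 2 * f p))
    (E1 E2 E3 δ : ℝ)
    (hE1 : E1 = ∫ p : EuclideanSpace ℝ (Fin 3), Real.sqrt κ1 * ‖p‖ * f p)
    (hE2 : E2 = ∫ p : EuclideanSpace ℝ (Fin 3), Edisp κ1 κ2 p * f p)
    (hE3 : E3 = E2 - E1) (hE3pos : 0 < E3)
    (hδ : δ * κ1 ^ (-(1 : ℝ) / 2) * Real.sqrt κ2 * E2 = E3 / 2) :
    E3 / (2 * Real.sqrt κ2) ≤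
      ∫ p in {p : EuclideanSpace ℝ (Fin 3) | δ ≤ ‖p‖}, ‖p‖ ^ 2 * f p := by
  rw [neg_div, Real.rpow_neg hκ1.le, ← Real.sqrt_eq_rpow] at hδ
  have hs1 : 0 < Real.sqrt κ1 := Real.sqrt_pos.2 hκ1
  have hs2 : 0 < Real.sqrt κ2 := Real.sqrt_pos.2 hκ2
  have h1' : Integrable fun p => Real.sqrt κ1 * ‖p‖ * f p := by
    simpa only [mul_assoc] using h1.const_mul (Real.sqrt κ1)
  have hE3g : E3 = ∫ p, (Edisp κ1 κ2 p - Real.sqrt κ1 * ‖p‖) * f p := by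
    simp only [hE3, hE2, hE1, ← integral_sub hE h1', sub_mul]
  have hmoment : Real.sqrt κ2 * ∫ p, ‖p‖ ^ 2 * f p ≤ E2 :=
    hE2 ▸ sqrt_mul_integral_sq_mul_le_integral_Edisp_mul hκ1.le hf h2 hE
  have hE2_nonneg : 0 ≤ E2 :=
    hE2 ▸ integral_nonneg fun p => mul_nonneg (Real.sqrt_nonneg _) (hf p)
  have hδ0 : 0 ≤ δ := by
    by_contra! hneg
    nlinarith [mul_nonneg (mul_nonneg (inv_nonneg.2 hs1.le) hs2.le) hE2_nonneg]
  have hsplit := integral_le_mul_setIntegral_add_mul_integral (μ := volume)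
    (g := fun p => (Edisp κ1 κ2 p - Real.sqrt κ1 * ‖p‖) * f p) (m := fun p => ‖p‖ ^ 2 * f p)
    (isClosed_le continuous_const continuous_norm).measurableSet
    (hE.sub h1' |>.congr (ae_of_all _ fun p => by simp only [Pi.sub_apply, sub_mul]))
    h2 (ae_of_all _ fun p => mul_nonneg (sq_nonneg _) (hf p))
    (c := δ * (Real.sqrt κ1)⁻¹ * κ2) (by positivity)
    (fun p _ => by simpa only [mul_assoc] using
      mul_le_mul_of_nonneg_right (Edisp_sub_le_sqrt_mul_sq hκ1.le hκ2.le p) (hf p))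
    (fun p hpS => by
      have hp : ‖p‖ < δ := by simpa using hpS
      simpa only [mul_assoc] using
        mul_le_mul_of_nonneg_right (Edisp_sub_le_of_norm_le hκ1 hκ2.le hp.le) (hf p))
  have hnear : δ * (Real.sqrt κ1)⁻¹ * κ2 * ∫ p, ‖p‖ ^ 2 * f p ≤ E3 / 2 := by
    have hscaled := mul_le_mul_of_nonneg_left hmoment
      (by positivity : 0 ≤ δ * (Real.sqrt κ1)⁻¹ * Real.sqrt κ2)
    linear_combination hscaled + hδ
      - δ * (Real.sqrt κ1)⁻¹ * (∫ p, ‖p‖ ^ 2 * f p) * Real.mul_self_sqrt hκ2.le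
  rw [← div_div, div_le_iff₀ hs2]
  linarith
end
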